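/- arXiv:hep-th/9711041 — 6 statements merged into one kernel-verified Lean document; each statement's English description precedes it below -/
import Mathlib

section
/- Let e, m ∈ ℝ, let A₀ : ℝ → ℝ be differentiable, and let φ : ℝ → ℂ⁴ be differentiable. Define ψ : ℝ⁴ → ℂ⁴ by ψ(x₀,x₁,x₂,x₃) = φ(x₃). Then ψ satisfies the Dirac equation i·Σ_{μ=0}^{3} γ_μ ∂ψ/∂x_μ − (e·γ₀·A₀(x₃) + m)ψ = 0 at every point of ℝ⁴ if and only if the function χ : ℝ → ℂ⁴ defined by χ(x) = φ(x/2) satisfies χ'(x) = V(x)J₃χ(x) + mJ₂χ(x) for all x ∈ ℝ, where V(x) = e·A₀(x/2), J₂ = (i/2)γ₃ and J₃ = (i/2)γ₃γ₀. -/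
open Matrix Complex

/-- The Dirac matrices in the Dirac representation:
`γ₀ = diag(1,1,-1,-1)` and `γ_k = [[0, σ_k], [-σ_k, 0]]` for `k = 1,2,3`,
where `σ₁ = [[0,1],[1,0]]`, `σ₂ = [[0,-i],[i,0]]`, `σ₃ = diag(1,-1)`. -/
noncomputable def diracGamma : Fin 4 → Matrix (Fin 4) (Fin 4) ℂ
  | 0 => !![1, 0, 0, 0;
            0, 1, 0, 0;
            0, 0, -1, 0;
            0, 0, 0, -1]
  | 1 => !![0, 0, 0, 1;
            0, 0, 1, 0;
            0, -1, 0, 0;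
            -1, 0, 0, 0]
  | 2 => !![0, 0, 0, -Complex.I;
            0, 0, Complex.I, 0;
            0, Complex.I, 0, 0;
            -Complex.I, 0, 0, 0]
  | 3 => !![0, 0, 1, 0;
            0, 0, 0, -1;
            -1, 0, 0, 0;
            0, 1, 0, 0]

/-! Since `ψ` depends on `x₃` alone, the Dirac equation collapses to `i γ₃ φ' = (e A₀ γ₀ + m) φ`.
As `(i γ₃)² = 1`, this is equivalent to `φ' = i γ₃ (e A₀ γ₀ + m) φ = 2 (e A₀ J₃ + m J₂) φ`, and the
rescaling `χ(x) = φ(x/2)` absorbs the factor `2`. -/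

theorem fderiv_comp_apply_apply {𝕜 ι E : Type*} [NontriviallyNormedField 𝕜] [Fintype ι]
    [NormedAddCommGroup E] [NormedSpace 𝕜 E] {φ : 𝕜 → E} (i : ι) (x v : ι → 𝕜)
    (hφ : DifferentiableAt 𝕜 φ (x i)) :
    fderiv 𝕜 (fun y => φ (y i)) x v = v i • deriv φ (x i) := by
  have h : HasFDerivAt (fun y : ι → 𝕜 => φ (y i)) _ x :=
    hφ.hasDerivAt.hasFDerivAt.comp x (hasFDerivAt_apply i x)
  rw [h.fderiv]
  simp

theorem sum_mulVec_single_smul {ι n R S : Type*} [Fintype ι] [DecidableEq ι] [Fintype n]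
    [Semiring R] [Semiring S] [Module S R] (M : ι → Matrix n n R) (i : ι) (w : n → R) :
    ∑ μ, M μ *ᵥ ((Pi.single μ (1 : S) : ι → S) i • w) = M i *ᵥ w := by
  simp [Pi.single_apply, apply_ite]

theorem HasDerivAt.comp_div_const_right {𝕜 E : Type*} [NontriviallyNormedField 𝕜]
    [NormedAddCommGroup E] [NormedSpace 𝕜 E] {φ : 𝕜 → E} {φ' : E} (c x : 𝕜)
    (hφ : HasDerivAt φ φ' (x / c)) :
    HasDerivAt (fun y => φ (y / c)) (c⁻¹ • φ') x := by
  simpa [div_eq_mul_inv, Function.comp_def] using hφ.scomp x ((hasDerivAt_id x).div_const c)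

theorem mulVec_eq_iff_eq_mulVec_of_mul_self_eq_one {n R : Type*} [Fintype n] [DecidableEq n]
    [Semiring R] {K : Matrix n n R} (hK : K * K = 1) {v w : n → R} :
    K *ᵥ v = w ↔ v = K *ᵥ w := by
  constructor <;> rintro rfl <;> rw [mulVec_mulVec, hK, one_mulVec]

theorem diracGamma_three_mul_self : diracGamma 3 * diracGamma 3 = -1 := by
  ext i j
  fin_cases i <;> fin_cases j <;> simp [diracGamma, mul_apply, Fin.sum_univ_four, one_apply]

theorem I_smul_diracGamma_three_mul_self :
    (I • diracGamma 3) * (I • diracGamma 3) = 1 := by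
  rw [smul_mul_smul, diracGamma_three_mul_self, I_mul_I, neg_one_smul, neg_neg]

theorem dirac_reduced_iff (a m : ℂ) (v d : Fin 4 → ℂ) :
    I • (diracGamma 3 *ᵥ d) - (a • diracGamma 0 + m • 1) *ᵥ v = 0 ↔
      a • (((I / 2) • (diracGamma 3 * diracGamma 0)) *ᵥ v) + m • (((I / 2) • diracGamma 3) *ᵥ v)
        = (2 : ℝ)⁻¹ • d := by
  have hJ : a • (((I / 2) • (diracGamma 3 * diracGamma 0)) *ᵥ v)
      + m • (((I / 2) • diracGamma 3) *ᵥ v)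
        = (2 : ℂ)⁻¹ • ((I • diracGamma 3) *ᵥ ((a • diracGamma 0 + m • 1) *ᵥ v)) := by
    simp only [add_mulVec, mulVec_add, smul_mulVec, mulVec_smul, mulVec_mulVec, one_mulVec,
      smul_mul_assoc, smul_smul, smul_add]
    module
  rw [hJ, ← coe_smul, sub_eq_zero, ← smul_mulVec,
    mulVec_eq_iff_eq_mulVec_of_mul_self_eq_one I_smul_diracGamma_three_mul_self, eq_comm]
  push_cast
  exact (smul_right_injective _ (by norm_num)).eq_iff.symm

theorem dirac_reduction_iff_general (e m : ℝ) (A₀ : ℝ → ℝ)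
    (φ : ℝ → (Fin 4 → ℂ)) (hφ : Differentiable ℝ φ)
    (ψ : (Fin 4 → ℝ) → (Fin 4 → ℂ)) (hψ : ∀ x, ψ x = φ (x 3))
    (χ : ℝ → (Fin 4 → ℂ)) (hχ : ∀ x, χ x = φ (x / 2))
    (V : ℝ → ℂ) (hV : ∀ x, V x = (e : ℂ) * (A₀ (x / 2) : ℂ))
    (J2 J3 : Matrix (Fin 4) (Fin 4) ℂ)
    (hJ2 : J2 = (Complex.I / 2) • diracGamma 3)
    (hJ3 : J3 = (Complex.I / 2) • (diracGamma 3 * diracGamma 0)) :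
    (∀ x : Fin 4 → ℝ,
        Complex.I • (∑ μ : Fin 4, diracGamma μ *ᵥ (fderiv ℝ ψ x (Pi.single μ 1)))
          - (((e : ℂ) * (A₀ (x 3) : ℂ)) • diracGamma 0
              + (m : ℂ) • (1 : Matrix (Fin 4) (Fin 4) ℂ)) *ᵥ ψ x = 0)
      ↔ (∀ x : ℝ, HasDerivAt χ (V x • (J3 *ᵥ χ x) + (m : ℂ) • (J2 *ᵥ χ x)) x) := by
  have hχ' : ∀ x, HasDerivAt χ ((2 : ℝ)⁻¹ • deriv φ (x / 2)) x := fun x => by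
    simpa [funext hχ] using (hφ (x / 2)).hasDerivAt.comp_div_const_right 2 x
  have hsum : ∀ x : Fin 4 → ℝ, ∑ μ : Fin 4, diracGamma μ *ᵥ fderiv ℝ ψ x (Pi.single μ 1)
      = diracGamma 3 *ᵥ deriv φ (x 3) := fun x => by
    simp only [funext hψ, fderiv_comp_apply_apply 3 x _ (hφ _), sum_mulVec_single_smul]
  have hχ_iff : ∀ x v, HasDerivAt χ v x ↔ v = (2 : ℝ)⁻¹ • deriv φ (x / 2) := fun x _ =>
    ⟨fun h => h.unique (hχ' x), fun h => h ▸ hχ' x⟩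
  simp only [hsum, hψ, hχ, hV, hJ2, hJ3, hχ_iff, dirac_reduced_iff]
  exact ⟨fun h x => h fun _ => x / 2, fun h x => by simpa using h (2 * x 3)⟩

/-- A spinor `ψ(x₀,x₁,x₂,x₃) = φ(x₃)` satisfies the Dirac equation
`i Σ_μ γ_μ ∂_μ ψ - (e γ₀ A₀(x₃) + m) ψ = 0` if and only if `χ(x) = φ(x/2)` satisfies
`χ'(x) = V(x) J₃ χ(x) + m J₂ χ(x)`, with `V(x) = e A₀(x/2)`, `J₂ = (i/2)γ₃`,
`J₃ = (i/2)γ₃γ₀`. -/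
theorem dirac_reduction_iff (e m : ℝ) (A₀ : ℝ → ℝ) (hA : Differentiable ℝ A₀)
    (φ : ℝ → (Fin 4 → ℂ)) (hφ : Differentiable ℝ φ)
    (ψ : (Fin 4 → ℝ) → (Fin 4 → ℂ)) (hψ : ∀ x, ψ x = φ (x 3))
    (χ : ℝ → (Fin 4 → ℂ)) (hχ : ∀ x, χ x = φ (x / 2))
    (V : ℝ → ℂ) (hV : ∀ x, V x = (e : ℂ) * (A₀ (x / 2) : ℂ))
    (J2 J3 : Matrix (Fin 4) (Fin 4) ℂ)
    (hJ2 : J2 = (Complex.I / 2) • diracGamma 3)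
    (hJ3 : J3 = (Complex.I / 2) • (diracGamma 3 * diracGamma 0)) :
    (∀ x : Fin 4 → ℝ,
        Complex.I • (∑ μ : Fin 4, diracGamma μ *ᵥ (fderiv ℝ ψ x (Pi.single μ 1)))
          - (((e : ℂ) * (A₀ (x 3) : ℂ)) • diracGamma 0
              + (m : ℂ) • (1 : Matrix (Fin 4) (Fin 4) ℂ)) *ᵥ ψ x = 0)
      ↔ (∀ x : ℝ, HasDerivAt χ (V x • (J3 *ᵥ χ x) + (m : ℂ) • (J2 *ᵥ χ x)) x) :=
  dirac_reduction_iff_general e m A₀ φ hφ ψ hψ χ hχ V hV J2 J3 hJ2 hJ3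
end

section
/- Let J₁, J₂, J₃ be 4×4 complex matrices satisfying [J₁,J₂] = J₃, [J₂,J₃] = J₁, [J₃,J₁] = J₂. Let V : ℝ → ℂ be three times differentiable, let m, C₁, C₃ ∈ ℂ, and assume V satisfies the stationary mKdV equation C₁(V''' + (3/2)V²V') = C₃V' on ℝ. Define Q(x) = C₁m³J₂ + C₁V(x)m²J₃ − C₁V'(x)mJ₁ + (−(1/2)C₁V(x)² + C₃)mJ₂ + (−C₁(V''(x) + (1/2)V(x)³) + C₃V(x))J₃. Then Q'(x) = V(x)[J₃, Q(x)] + m[J₂, Q(x)] for all x ∈ ℝ; that is, Q is a Lie symmetry of the operator L = d/dx − V(x)J₃ − mJ₂. -/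
/-!
Q takes values in the span of J₁, J₂, J₃, and by the commutation relations the operators
V[J₃, ·] + m[J₂, ·] preserve this span. Writing Q = q₁J₁ + q₂J₂ + q₃J₃, the Lax equation
becomes the linear system q₁' = m q₃ − V q₂, q₂' = V q₁, q₃' = −m q₁. The first two hold
identically; the third is exactly the stationary mKdV equation.
-/

open Matrix

section BracketRelations

variable {R A : Type*} [CommRing R] [Ring A] [Algebra R A] {J1 J2 J3 : A}

theorem smul_commutator_J3_add_smul_commutator_J2
    (h12 : J1 * J2 - J2 * J1 = J3) (h23 : J2 * J3 - J3 * J2 = J1)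
    (h31 : J3 * J1 - J1 * J3 = J2) (v m a b c : R) :
    v • (J3 * (a • J1 + b • J2 + c • J3) - (a • J1 + b • J2 + c • J3) * J3)
        + m • (J2 * (a • J1 + b • J2 + c • J3) - (a • J1 + b • J2 + c • J3) * J2)
      = (m * c - v * b) • J1 + (v * a) • J2 + (-(m * a)) • J3 := by
  simp only [mul_add, add_mul, mul_smul_comm, smul_mul_assoc]
  rw [eq_add_of_sub_eq h12, eq_add_of_sub_eq h23, eq_add_of_sub_eq h31]
  module

end BracketRelations

theorem hasDerivAt_smul_add_smul_add_smul_apply {n p : Type*} {J1 J2 J3 : Matrix n p ℂ}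
    {q1 q2 q3 : ℝ → ℂ} {d1 d2 d3 : ℂ} {x : ℝ} (h1 : HasDerivAt q1 d1 x)
    (h2 : HasDerivAt q2 d2 x) (h3 : HasDerivAt q3 d3 x) (i : n) (j : p) :
    HasDerivAt (fun y => (q1 y • J1 + q2 y • J2 + q3 y • J3) i j)
      ((d1 • J1 + d2 • J2 + d3 • J3) i j) x := by
  simp only [Matrix.add_apply, Matrix.smul_apply, smul_eq_mul]
  exact ((h1.mul_const _).add (h2.mul_const _)).add (h3.mul_const _)

namespace MKdVSymmetry

variable (V : ℝ → ℂ) (m C1 C3 : ℂ)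

noncomputable def coeff1 (x : ℝ) : ℂ := -(C1 * deriv V x * m)

noncomputable def coeff2 (x : ℝ) : ℂ := C1 * m ^ 3 + (-(1 / 2) * C1 * V x ^ 2 + C3) * m

noncomputable def coeff3 (x : ℝ) : ℂ :=
  C1 * V x * m ^ 2 + (-(C1 * (deriv (deriv V) x + (1 / 2) * V x ^ 3)) + C3 * V x)

variable {V} {x : ℝ}

theorem hasDerivAt_coeff1 (hV' : DifferentiableAt ℝ (deriv V) x) :
    HasDerivAt (coeff1 V m C1) (m * coeff3 V m C1 C3 x - V x * coeff2 V m C1 C3 x) x :=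
  ((hV'.hasDerivAt.const_mul C1).mul_const m).neg.congr_deriv
    (by simp only [coeff2, coeff3]; ring)

theorem hasDerivAt_coeff2 (hV : DifferentiableAt ℝ V x) :
    HasDerivAt (coeff2 V m C1 C3) (V x * coeff1 V m C1 x) x := by
  have hsq := (hV.hasDerivAt.pow 2).const_mul (-(1 / 2) * C1)
  exact (((hsq.add_const C3).mul_const m).const_add (C1 * m ^ 3)).congr_deriv
    (by simp only [coeff1]; ring)

theorem hasDerivAt_coeff3 (hV : DifferentiableAt ℝ V x)
    (hV'' : DifferentiableAt ℝ (deriv (deriv V)) x)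
    (hmkdv : C1 * (deriv (deriv (deriv V)) x + (3 / 2) * V x ^ 2 * deriv V x)
        = C3 * deriv V x) :
    HasDerivAt (coeff3 V m C1 C3) (-(m * coeff1 V m C1 x)) x := by
  have hV₀ := hV.hasDerivAt
  have hcube := (hV''.hasDerivAt.add ((hV₀.pow 3).const_mul (1 / 2))).const_mul C1
  exact (((hV₀.const_mul C1).mul_const (m ^ 2)).add (hcube.neg.add (hV₀.const_mul C3)))
    |>.congr_deriv (by simp only [coeff1]; linear_combination -hmkdv)

end MKdVSymmetry

/-- If `V` satisfies the stationary mKdV equation `C₁(V''' + (3/2)V²V') = C₃V'`, then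
`Q(x) = C₁m³J₂ + C₁V m²J₃ - C₁V' m J₁ + (-(1/2)C₁V² + C₃) m J₂
        + (-C₁(V'' + (1/2)V³) + C₃V) J₃`
is a Lie symmetry of `L = d/dx - V(x)J₃ - mJ₂`, i.e. `Q' = V[J₃,Q] + m[J₂,Q]`. -/
theorem mkdv_gives_lie_symmetry
    (J1 J2 J3 : Matrix (Fin 4) (Fin 4) ℂ)
    (h12 : J1 * J2 - J2 * J1 = J3)
    (h23 : J2 * J3 - J3 * J2 = J1)
    (h31 : J3 * J1 - J1 * J3 = J2)
    (V : ℝ → ℂ)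
    (hV : Differentiable ℝ V)
    (hV' : Differentiable ℝ (deriv V))
    (hV'' : Differentiable ℝ (deriv (deriv V)))
    (m C1 C3 : ℂ)
    (hmkdv : ∀ x, C1 * (deriv (deriv (deriv V)) x + (3 / 2) * V x ^ 2 * deriv V x)
        = C3 * deriv V x)
    (Q : ℝ → Matrix (Fin 4) (Fin 4) ℂ)
    (hQ : ∀ x, Q x =
        (C1 * m ^ 3) • J2
      + (C1 * V x * m ^ 2) • J3
      + (-(C1 * deriv V x * m)) • J1
      + ((-(1 / 2) * C1 * V x ^ 2 + C3) * m) • J2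
      + (-(C1 * (deriv (deriv V) x + (1 / 2) * V x ^ 3)) + C3 * V x) • J3) :
    ∀ (x : ℝ) (i j : Fin 4),
      HasDerivAt (fun y => Q y i j)
        ((V x • (J3 * Q x - Q x * J3) + m • (J2 * Q x - Q x * J2)) i j) x := by
  intro x i j
  have hQ_coords : ∀ y, Q y = MKdVSymmetry.coeff1 V m C1 y • J1
      + MKdVSymmetry.coeff2 V m C1 C3 y • J2 + MKdVSymmetry.coeff3 V m C1 C3 y • J3 := by
    intro y
    rw [hQ y, MKdVSymmetry.coeff1, MKdVSymmetry.coeff2, MKdVSymmetry.coeff3]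
    module
  simp only [hQ_coords, smul_commutator_J3_add_smul_commutator_J2 h12 h23 h31]
  exact hasDerivAt_smul_add_smul_add_smul_apply
    (MKdVSymmetry.hasDerivAt_coeff1 m C1 C3 (hV' x))
    (MKdVSymmetry.hasDerivAt_coeff2 m C1 C3 (hV x))
    (MKdVSymmetry.hasDerivAt_coeff3 m C1 C3 (hV x) (hV'' x) (hmkdv x)) i j
end

section
/- Let J₁, J₂, J₃ be 4×4 complex matrices satisfying [J₁,J₂] = J₃, [J₂,J₃] = J₁, [J₃,J₁] = J₂. Let V : ℝ → ℂ be twice differentiable, let m, C₂, C₄ ∈ ℂ, and assume V satisfies the nonlinear ODE C₂(V'' + (1/2)V³) = C₄V on ℝ. Define Q(x) = C₂m²J₂ + C₂V(x)mJ₃ − C₂V'(x)J₁ + (−(1/2)C₂V(x)² + C₄)J₂. Then Q'(x) = V(x)[J₃, Q(x)] + m[J₂, Q(x)] for all x ∈ ℝ; that is, Q is a Lie symmetry of the operator L = d/dx − V(x)J₃ − mJ₂. -/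
/-!
In the basis `J₁, J₂, J₃`, `Q` has coordinates `(-C₂V', C₂m² - ½C₂V² + C₄, C₂Vm)`, and the
commutation relations make `X ↦ V[J₃,X] + m[J₂,X]` act on coordinates as
`(a, b, c) ↦ (mc - Vb, Va, -ma)`. Comparing with the coordinatewise derivative of `Q`, the
`J₂`- and `J₃`-components agree identically and the `J₁`-component is the ODE.
-/

open Matrix

theorem smul_commutator_add_smul_commutator {K A : Type*} [CommRing K] [Ring A] [Algebra K A]
    {J1 J2 J3 : A} (h12 : J1 * J2 - J2 * J1 = J3) (h23 : J2 * J3 - J3 * J2 = J1)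
    (h31 : J3 * J1 - J1 * J3 = J2) (v m a b c : K) :
    v • (J3 * (a • J1 + b • J2 + c • J3) - (a • J1 + b • J2 + c • J3) * J3)
      + m • (J2 * (a • J1 + b • J2 + c • J3) - (a • J1 + b • J2 + c • J3) * J2) =
      (m * c - v * b) • J1 + (v * a) • J2 + (-(m * a)) • J3 := by
  have e21 : J2 * J1 = J1 * J2 - J3 := by rw [← h12]; abel
  have e32 : J3 * J2 = J2 * J3 - J1 := by rw [← h23]; abel
  have e31 : J3 * J1 = J1 * J3 + J2 := by rw [← h31]; abel
  simp only [mul_add, add_mul, mul_smul_comm, smul_mul_assoc, e21, e32, e31]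
  rw [← h12, ← h23, ← h31]
  module

theorem HasDerivAt.smul_add_smul_add_smul_apply {𝕜 𝔸 : Type*} [NontriviallyNormedField 𝕜]
    [NormedRing 𝔸] [NormedAlgebra 𝕜 𝔸] {n p : Type*} {a b c : 𝕜 → 𝔸} {a' b' c' : 𝔸} {x : 𝕜}
    (ha : HasDerivAt a a' x) (hb : HasDerivAt b b' x) (hc : HasDerivAt c c' x)
    (A B C : Matrix n p 𝔸) (i : n) (j : p) :
    HasDerivAt (fun y => (a y • A + b y • B + c y • C) i j) ((a' • A + b' • B + c' • C) i j) x := by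
  simp only [Matrix.add_apply, Matrix.smul_apply, smul_eq_mul]
  exact ((ha.mul_const _).add (hb.mul_const _)).add (hc.mul_const _)

/-- If `V` satisfies the nonlinear ODE `C₂(V'' + (1/2)V³) = C₄V`, then
`Q(x) = C₂m²J₂ + C₂V m J₃ - C₂V' J₁ + (-(1/2)C₂V² + C₄) J₂`
is a Lie symmetry of `L = d/dx - V(x)J₃ - mJ₂`, i.e. `Q' = V[J₃,Q] + m[J₂,Q]`. -/
theorem ode_gives_lie_symmetry
    (J1 J2 J3 : Matrix (Fin 4) (Fin 4) ℂ)
    (h12 : J1 * J2 - J2 * J1 = J3)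
    (h23 : J2 * J3 - J3 * J2 = J1)
    (h31 : J3 * J1 - J1 * J3 = J2)
    (V : ℝ → ℂ)
    (hV : Differentiable ℝ V)
    (hV' : Differentiable ℝ (deriv V))
    (m C2 C4 : ℂ)
    (hode : ∀ x, C2 * (deriv (deriv V) x + (1 / 2) * V x ^ 3) = C4 * V x)
    (Q : ℝ → Matrix (Fin 4) (Fin 4) ℂ)
    (hQ : ∀ x, Q x =
        (C2 * m ^ 2) • J2
      + (C2 * V x * m) • J3
      + (-(C2 * deriv V x)) • J1
      + (-(1 / 2) * C2 * V x ^ 2 + C4) • J2) :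
    ∀ (x : ℝ) (i j : Fin 4),
      HasDerivAt (fun y => Q y i j)
        ((V x • (J3 * Q x - Q x * J3) + m • (J2 * Q x - Q x * J2)) i j) x := by
  intro x i j
  have hQ_coords : Q = fun y => (-(C2 * deriv V y)) • J1
      + (C2 * m ^ 2 + (-(1 / 2) * C2 * V y ^ 2 + C4)) • J2 + (C2 * V y * m) • J3 :=
    funext fun y => by rw [hQ]; module
  subst hQ_coords
  rw [smul_commutator_add_smul_commutator h12 h23 h31]
  have hJ1 : m * (C2 * V x * m) - V x * (C2 * m ^ 2 + (-(1 / 2) * C2 * V x ^ 2 + C4))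
      = -(C2 * deriv (deriv V) x) := by linear_combination hode x
  have hJ2 : V x * -(C2 * deriv V x) = -(1 / 2) * C2 * (2 * V x * deriv V x) := by ring
  have hJ3 : -(m * -(C2 * deriv V x)) = C2 * deriv V x * m := by ring
  rw [hJ1, hJ2, hJ3]
  have hV_sq : HasDerivAt (fun y => V y ^ 2) (2 * V x * deriv V x) x :=
    ((hV x).hasDerivAt.fun_pow 2).congr_deriv (by push_cast; ring)
  exact HasDerivAt.smul_add_smul_add_smul_apply ((hV' x).hasDerivAt.const_mul C2).neg
    (((hV_sq.const_mul _).add_const _).const_add _)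
    (((hV x).hasDerivAt.const_mul C2).mul_const m) _ _ _ i j
end

section
/- Let V : ℝ → ℂ be three times differentiable and let a_k, b_k, c_k, d_k : ℝ → ℂ (k = 1,2,3) be differentiable functions satisfying on all of ℝ the determining equations: d₁ = 0, d₃ = 0; d₁' = −V·d₂ + c₃, d₂' = V·d₁, d₃' = −c₁; c₁' = −V·c₂ + b₃, c₂' = V·c₁, c₃' = −b₁; b₁' = −V·b₂ + a₃, b₂' = V·b₁, b₃' = −a₁; a₁' = −V·a₂, a₂' = V·a₁, a₃' = 0. Then there exist constants C₁, C₂, C₃, C₄ ∈ ℂ such that d₂ = C₁, c₁ = 0, c₂ = C₂, c₃ = C₁V, b₁ = −C₁V', b₂ = −(1/2)C₁V² + C₃, b₃ = C₂V, a₁ = −C₂V', a₂ = −(1/2)C₂V² + C₄, a₃ = −C₁(V'' + (1/2)V³) + C₃V, and moreover V satisfies the two nonlinear ODEs C₁(V''' + (3/2)V²V') = C₃V' and C₂(V'' + (1/2)V³) = C₄V on ℝ. -/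
/-!
The determining equations split into the triples `(d₁, d₂, d₃)`, `(c₁, c₂, c₃)`,
`(b₁, b₂, b₃)`, `(a₁, a₂, a₃)`, one for each power of `m`, and each triple feeds the next.
If the first component of a triple is `-K V'`, then `p₂' = V p₁ = -K V V'` integrates to
`p₂ = -K V²/2 + C`, and `p₁' = -V p₂ + q₃` then determines the third component `q₃` of the
following triple; if its third component is `L V`, then `p₃' = -q₁` gives `q₁ = -L V'`.
Starting from `d₁ = d₃ = 0` this produces the constants `C₁, …, C₄` one per triple, and the
two equations of the last triple, `a₁' = -V a₂` and `a₃' = 0`, are the two ODEs for `V`.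
-/

variable {V : ℝ → ℂ}

theorem exists_eq_neg_half_mul_sq_add_of_deriv_eq (hV : Differentiable ℝ V) {f : ℝ → ℂ}
    (hf : Differentiable ℝ f) {K : ℂ} (h : ∀ x, deriv f x = -K * V x * deriv V x) :
    ∃ C : ℂ, ∀ x, f x = -(1 / 2) * K * V x ^ 2 + C := by
  have hderiv : ∀ x, HasDerivAt (fun y => f y + (1 / 2) * K * V y ^ 2) 0 x := fun x =>
    ((hf x).hasDerivAt.add (((hV x).hasDerivAt.fun_pow 2).const_mul ((1 / 2) * K))).congr_deriv
      (by rw [h x]; push_cast; ring)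
  refine ⟨f 0 + (1 / 2) * K * V 0 ^ 2, fun x => ?_⟩
  have hconst := is_const_of_deriv_eq_zero (fun y => (hderiv y).differentiableAt)
    (fun y => (hderiv y).deriv) x 0
  linear_combination hconst

theorem exists_const_of_deriv_pair (hV : Differentiable ℝ V) (hV' : Differentiable ℝ (deriv V))
    {p₁ p₂ q₃ : ℝ → ℂ} (hp₂ : Differentiable ℝ p₂) {K : ℂ}
    (hp₁ : ∀ x, p₁ x = -K * deriv V x)
    (e₁ : ∀ x, deriv p₁ x = -V x * p₂ x + q₃ x) (e₂ : ∀ x, deriv p₂ x = V x * p₁ x) :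
    ∃ C : ℂ, (∀ x, p₂ x = -(1 / 2) * K * V x ^ 2 + C) ∧
      ∀ x, q₃ x = -K * (deriv (deriv V) x + (1 / 2) * V x ^ 3) + C * V x := by
  obtain ⟨C, hC⟩ := exists_eq_neg_half_mul_sq_add_of_deriv_eq hV hp₂ (K := K)
    fun x => by rw [e₂ x, hp₁ x]; ring
  refine ⟨C, hC, fun x => ?_⟩
  have hderiv : deriv p₁ x = -K * deriv (deriv V) x := by
    rw [funext hp₁, deriv_const_mul _ (hV' x)]
  have h := e₁ x
  rw [hderiv, hC x] at h
  linear_combination -h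

theorem eq_neg_mul_deriv_of_deriv_eq_neg (hV : Differentiable ℝ V) {p q : ℝ → ℂ} {L : ℂ}
    (hp : ∀ x, p x = L * V x) (e : ∀ x, deriv p x = -q x) (x : ℝ) :
    q x = -L * deriv V x := by
  have h := e x
  rw [funext hp, deriv_const_mul _ (hV x)] at h
  linear_combination h

theorem hasDerivAt_neg_mul_add_mul (hV : Differentiable ℝ V)
    (hV'' : Differentiable ℝ (deriv (deriv V))) (K C : ℂ) (x : ℝ) :
    HasDerivAt (fun y => -K * (deriv (deriv V) y + (1 / 2) * V y ^ 3) + C * V y)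
      (-K * (deriv (deriv (deriv V)) x + (3 / 2) * V x ^ 2 * deriv V x)
        + C * deriv V x) x :=
  ((((hV'' x).hasDerivAt.add (((hV x).hasDerivAt.fun_pow 3).const_mul (1 / 2))).const_mul
    (-K)).add ((hV x).hasDerivAt.const_mul C)).congr_deriv (by push_cast; ring)

theorem determining_equations_solution_general
    (V a1 a2 a3 b1 b2 b3 c1 c2 c3 d1 d2 d3 : ℝ → ℂ)
    (hV : Differentiable ℝ V)
    (hV' : Differentiable ℝ (deriv V))
    (hV'' : Differentiable ℝ (deriv (deriv V)))
    (ha2 : Differentiable ℝ a2)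
    (hb2 : Differentiable ℝ b2)
    (hc2 : Differentiable ℝ c2)
    (hd2 : Differentiable ℝ d2)
    (e1 : ∀ x, d1 x = 0) (e2 : ∀ x, d3 x = 0)
    (e3 : ∀ x, deriv d1 x = -V x * d2 x + c3 x)
    (e4 : ∀ x, deriv d2 x = V x * d1 x)
    (e5 : ∀ x, deriv d3 x = -c1 x)
    (e6 : ∀ x, deriv c1 x = -V x * c2 x + b3 x)
    (e7 : ∀ x, deriv c2 x = V x * c1 x)
    (e8 : ∀ x, deriv c3 x = -b1 x)
    (e9 : ∀ x, deriv b1 x = -V x * b2 x + a3 x)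
    (e10 : ∀ x, deriv b2 x = V x * b1 x)
    (e11 : ∀ x, deriv b3 x = -a1 x)
    (e12 : ∀ x, deriv a1 x = -V x * a2 x)
    (e13 : ∀ x, deriv a2 x = V x * a1 x)
    (e14 : ∀ x, deriv a3 x = 0) :
    ∃ C1 C2 C3 C4 : ℂ,
      (∀ x, d2 x = C1) ∧
      (∀ x, c1 x = 0) ∧
      (∀ x, c2 x = C2) ∧
      (∀ x, c3 x = C1 * V x) ∧
      (∀ x, b1 x = -C1 * deriv V x) ∧
      (∀ x, b2 x = -(1 / 2) * C1 * V x ^ 2 + C3) ∧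
      (∀ x, b3 x = C2 * V x) ∧
      (∀ x, a1 x = -C2 * deriv V x) ∧
      (∀ x, a2 x = -(1 / 2) * C2 * V x ^ 2 + C4) ∧
      (∀ x, a3 x = -C1 * (deriv (deriv V) x + (1 / 2) * V x ^ 3) + C3 * V x) ∧
      (∀ x, C1 * (deriv (deriv (deriv V)) x + (3 / 2) * V x ^ 2 * deriv V x)
          = C3 * deriv V x) ∧
      (∀ x, C2 * (deriv (deriv V) x + (1 / 2) * V x ^ 3) = C4 * V x) := by
  obtain ⟨C1, hd2, hc3⟩ := exists_const_of_deriv_pair hV hV' hd2 (K := 0) (by simp [e1]) e3 e4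
  have hc1 := eq_neg_mul_deriv_of_deriv_eq_neg hV (L := 0) (by simp [e2]) e5
  obtain ⟨C2, hc2, hb3⟩ := exists_const_of_deriv_pair hV hV' hc2 hc1 e6 e7
  simp only [neg_zero, zero_mul, zero_add, mul_zero] at hd2 hc3 hc1 hc2 hb3
  have hb1 := eq_neg_mul_deriv_of_deriv_eq_neg hV hc3 e8
  obtain ⟨C3, hb2, ha3⟩ := exists_const_of_deriv_pair hV hV' hb2 hb1 e9 e10
  have ha1 := eq_neg_mul_deriv_of_deriv_eq_neg hV hb3 e11
  obtain ⟨C4, ha2, hV2⟩ :=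
    exists_const_of_deriv_pair hV hV' ha2 (q₃ := fun _ => 0) ha1 (by simpa using e12) e13
  refine ⟨C1, C2, C3, C4, hd2, hc1, hc2, hc3, hb1, hb2, hb3, ha1, ha2, ha3, fun x => ?_,
    fun x => by linear_combination hV2 x⟩
  have h := (hasDerivAt_neg_mul_add_mul hV hV'' C1 C3 x).deriv
  rw [← funext ha3, e14 x] at h
  linear_combination h

/-- Integrating the determining equations: any solution of the determining
equations is given in terms of four constants `C₁, C₂, C₃, C₄` and the potential `V`,
which furthermore must satisfy `C₁(V''' + (3/2)V²V') = C₃V'` and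
`C₂(V'' + (1/2)V³) = C₄V`. -/
theorem determining_equations_solution
    (V a1 a2 a3 b1 b2 b3 c1 c2 c3 d1 d2 d3 : ℝ → ℂ)
    (hV : Differentiable ℝ V)
    (hV' : Differentiable ℝ (deriv V))
    (hV'' : Differentiable ℝ (deriv (deriv V)))
    (ha1 : Differentiable ℝ a1) (ha2 : Differentiable ℝ a2) (ha3 : Differentiable ℝ a3)
    (hb1 : Differentiable ℝ b1) (hb2 : Differentiable ℝ b2) (hb3 : Differentiable ℝ b3)
    (hc1 : Differentiable ℝ c1) (hc2 : Differentiable ℝ c2) (hc3 : Differentiable ℝ c3)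
    (hd1 : Differentiable ℝ d1) (hd2 : Differentiable ℝ d2) (hd3 : Differentiable ℝ d3)
    (e1 : ∀ x, d1 x = 0) (e2 : ∀ x, d3 x = 0)
    (e3 : ∀ x, deriv d1 x = -V x * d2 x + c3 x)
    (e4 : ∀ x, deriv d2 x = V x * d1 x)
    (e5 : ∀ x, deriv d3 x = -c1 x)
    (e6 : ∀ x, deriv c1 x = -V x * c2 x + b3 x)
    (e7 : ∀ x, deriv c2 x = V x * c1 x)
    (e8 : ∀ x, deriv c3 x = -b1 x)
    (e9 : ∀ x, deriv b1 x = -V x * b2 x + a3 x)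
    (e10 : ∀ x, deriv b2 x = V x * b1 x)
    (e11 : ∀ x, deriv b3 x = -a1 x)
    (e12 : ∀ x, deriv a1 x = -V x * a2 x)
    (e13 : ∀ x, deriv a2 x = V x * a1 x)
    (e14 : ∀ x, deriv a3 x = 0) :
    ∃ C1 C2 C3 C4 : ℂ,
      (∀ x, d2 x = C1) ∧
      (∀ x, c1 x = 0) ∧
      (∀ x, c2 x = C2) ∧
      (∀ x, c3 x = C1 * V x) ∧
      (∀ x, b1 x = -C1 * deriv V x) ∧
      (∀ x, b2 x = -(1 / 2) * C1 * V x ^ 2 + C3) ∧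
      (∀ x, b3 x = C2 * V x) ∧
      (∀ x, a1 x = -C2 * deriv V x) ∧
      (∀ x, a2 x = -(1 / 2) * C2 * V x ^ 2 + C4) ∧
      (∀ x, a3 x = -C1 * (deriv (deriv V) x + (1 / 2) * V x ^ 3) + C3 * V x) ∧
      (∀ x, C1 * (deriv (deriv (deriv V)) x + (3 / 2) * V x ^ 2 * deriv V x)
          = C3 * deriv V x) ∧
      (∀ x, C2 * (deriv (deriv V) x + (1 / 2) * V x ^ 3) = C4 * V x) :=
  determining_equations_solution_general V a1 a2 a3 b1 b2 b3 c1 c2 c3 d1 d2 d3 hV hV' hV'' ha2 hb2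
    hc2 hd2 e1 e2 e3 e4 e5 e6 e7 e8 e9 e10 e11 e12 e13 e14
end

section
/- Let a < b be real numbers and let u : [a,b] → ℝ³ be continuously differentiable with u(x) ≠ 0 for every x ∈ [a,b]. Then there exists a continuously differentiable map R : [a,b] → SO(3) (real 3×3 orthogonal matrices of determinant 1) such that R(x)·u(x) = (‖u(x)‖, 0, 0)ᵀ for all x ∈ [a,b]. -/
open Matrix Set MeasureTheory Module
open scoped RealInnerProductSpace

/-!
Normalise `u` to the unit curve `v = ‖u‖⁻¹ • u`. The lines `ℝ v(x)` sweep out the image of the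
plane under the `C¹` map `(t, x) ↦ t v(x)`, which is Lebesgue-null in `ℝ³`, so some vector `e`
lies on none of them. Gram–Schmidt of `e` against `v(x)` then gives a `C¹` unit normal `q(x)`,
and `v(x), q(x), v(x) × q(x)` are the rows of the required rotation.
-/

theorem addHaar_image_eq_zero_of_differentiableOn_of_finrank_lt
    {F E : Type*} [NormedAddCommGroup F] [NormedSpace ℝ F] [FiniteDimensional ℝ F]
    [NormedAddCommGroup E] [NormedSpace ℝ E] [FiniteDimensional ℝ E]
    [MeasurableSpace E] [BorelSpace E] (μ : Measure E) [μ.IsAddHaarMeasure]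
    {f : F → E} {s : Set F} (hf : DifferentiableOn ℝ f s) (hFE : finrank ℝ F < finrank ℝ E) :
    μ (f '' s) = 0 := by
  -- `f '' s` is the image under `f ∘ P` of the null set `J '' s ⊆ range J`, where `P ∘ J = id`.
  obtain ⟨J, hJ⟩ := finrank_le_iff_exists_linearMap.1 hFE.le
  obtain ⟨P, hPJ⟩ := J.exists_leftInverse_of_injective (LinearMap.ker_eq_bot.2 hJ)
  have hPJ_apply (x : F) : P (J x) = x := LinearMap.congr_fun hPJ x
  have hrange : μ (LinearMap.range J) = 0 := by
    refine Measure.addHaar_submodule μ _ fun htop => hFE.ne ?_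
    rw [← LinearMap.finrank_range_of_inj hJ, htop, finrank_top]
  have himage : f '' s = (f ∘ P) '' (J '' s) := by
    rw [image_image]; simp only [Function.comp_apply, hPJ_apply]
  rw [himage]
  refine addHaar_image_eq_zero_of_differentiableOn_of_addHaar_eq_zero μ ?_
    (measure_mono_null (image_subset_range _ _) hrange)
  rintro _ ⟨x, hx, rfl⟩
  refine DifferentiableWithinAt.comp (J x) (by rw [hPJ_apply]; exact hf x hx)
    (LinearMap.toContinuousLinearMap P).differentiableWithinAt ?_
  rintro _ ⟨y, hy, rfl⟩
  simpa [hPJ_apply] using hy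

theorem exists_forall_notMem_span_singleton_of_differentiableOn
    {E : Type*} [NormedAddCommGroup E] [NormedSpace ℝ E] [FiniteDimensional ℝ E]
    (hE : 2 < finrank ℝ E) {u : ℝ → E} {s : Set ℝ} (hu : DifferentiableOn ℝ u s) :
    ∃ e : E, ∀ x ∈ s, e ∉ ℝ ∙ u x := by
  let _ : MeasurableSpace E := borel E
  have _ : BorelSpace E := ⟨rfl⟩
  have hcone : (Measure.addHaar : Measure E) ((fun p : ℝ × ℝ => p.1 • u p.2) '' (univ ×ˢ s)) = 0 :=
    addHaar_image_eq_zero_of_differentiableOn_of_finrank_lt _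
      (differentiableOn_fst.smul (hu.comp differentiableOn_snd fun p hp => hp.2))
      (by simpa using hE)
  by_contra! hall
  refine (Measure.measure_univ_pos.2 (NeZero.ne Measure.addHaar)).ne' (measure_mono_null ?_ hcone)
  intro e _
  obtain ⟨x, hx, he⟩ := hall e
  obtain ⟨t, rfl⟩ := Submodule.mem_span_singleton.1 he
  exact ⟨(t, x), ⟨mem_univ t, hx⟩, rfl⟩

section UnitNormal

variable {E : Type*} [NormedAddCommGroup E] [InnerProductSpace ℝ E] {n : WithTop ℕ∞}
  {s : Set ℝ}

theorem ContDiffOn.inv_norm_smul {w : ℝ → E} (hw : ContDiffOn ℝ n w s) (h0 : ∀ x ∈ s, w x ≠ 0) :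
    ContDiffOn ℝ n (fun x => ‖w x‖⁻¹ • w x) s :=
  ((hw.norm ℝ h0).inv fun x hx => norm_ne_zero_iff.2 (h0 x hx)).smul hw

theorem exists_contDiffOn_unit_orthogonal {v : ℝ → E} (hv : ContDiffOn ℝ n v s)
    (hv1 : ∀ x ∈ s, ‖v x‖ = 1) {e : E} (he : ∀ x ∈ s, e ∉ ℝ ∙ v x) :
    ∃ q : ℝ → E, ContDiffOn ℝ n q s ∧ ∀ x ∈ s, ‖q x‖ = 1 ∧ ⟪v x, q x⟫ = 0 := by
  set w : ℝ → E := fun x => e - ⟪v x, e⟫ • v x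
  have hw0 (x : ℝ) (hx : x ∈ s) : w x ≠ 0 := fun h =>
    he x hx (Submodule.mem_span_singleton.2 ⟨⟪v x, e⟫, (sub_eq_zero.1 h).symm⟩)
  have hvw (x : ℝ) (hx : x ∈ s) : ⟪v x, w x⟫ = 0 := by
    simp [w, inner_sub_right, real_inner_smul_right, hv1 x hx]
  refine ⟨fun x => ‖w x‖⁻¹ • w x, ?_, fun x hx => ⟨norm_smul_inv_norm (hw0 x hx), ?_⟩⟩
  · exact (contDiffOn_const.sub ((hv.inner ℝ contDiffOn_const).smul hv)).inv_norm_smul hw0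
  · rw [real_inner_smul_right, hvw x hx, mul_zero]

end UnitNormal

theorem Matrix.of_cross_mem_specialOrthogonalGroup {p q : Fin 3 → ℝ} (hp : p ⬝ᵥ p = 1)
    (hq : q ⬝ᵥ q = 1) (hpq : p ⬝ᵥ q = 0) :
    of ![p, q, p ⨯₃ q] ∈ specialOrthogonalGroup (Fin 3) ℝ := by
  have hcross : p ⨯₃ q ⬝ᵥ p ⨯₃ q = 1 := by
    rw [cross_dot_cross, hp, hq, hpq]; ring
  refine mem_specialOrthogonalGroup_iff.2 ⟨(mem_orthogonalGroup_iff _ _).2 ?_, ?_⟩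
  · ext i j
    change ![p, q, p ⨯₃ q] i ⬝ᵥ ![p, q, p ⨯₃ q] j = (1 : Matrix (Fin 3) (Fin 3) ℝ) i j
    fin_cases i <;> fin_cases j <;>
      simp [hp, hq, hpq, hcross, dotProduct_comm q p, dotProduct_comm (p ⨯₃ q)]
  · change det ![p, q, p ⨯₃ q] = 1
    rw [← triple_product_eq_det, triple_product_permutation, triple_product_permutation, hcross]

theorem Matrix.of_cross_mulVec_smul {p q : Fin 3 → ℝ} (hp : p ⬝ᵥ p = 1) (hpq : p ⬝ᵥ q = 0)
    (c : ℝ) : of ![p, q, p ⨯₃ q] *ᵥ (c • p) = ![c, 0, 0] := by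
  ext i
  fin_cases i
  · change p ⬝ᵥ (c • p) = c
    rw [dotProduct_smul, hp, smul_eq_mul, mul_one]
  · change q ⬝ᵥ (c • p) = 0
    rw [dotProduct_smul, dotProduct_comm, hpq, smul_zero]
  · change p ⨯₃ q ⬝ᵥ (c • p) = 0
    rw [dotProduct_smul, dotProduct_comm, dot_self_cross, smul_zero]

theorem contDiffOn_of_cross_apply {G : Type*} [NormedAddCommGroup G] [NormedSpace ℝ G]
    {n : WithTop ℕ∞} {s : Set G} {v q : G → EuclideanSpace ℝ (Fin 3)} (hv : ContDiffOn ℝ n v s)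
    (hq : ContDiffOn ℝ n q s) (i j : Fin 3) :
    ContDiffOn ℝ n (fun x => of ![(v x).ofLp, (q x).ofLp, (v x).ofLp ⨯₃ (q x).ofLp] i j) s := by
  have hvj (j : Fin 3) : ContDiffOn ℝ n (fun x => v x j) s :=
    (EuclideanSpace.proj (𝕜 := ℝ) j).contDiff.comp_contDiffOn hv
  have hqj (j : Fin 3) : ContDiffOn ℝ n (fun x => q x j) s :=
    (EuclideanSpace.proj (𝕜 := ℝ) j).contDiff.comp_contDiffOn hq
  fin_cases i <;> fin_cases j <;> simp [cross_apply] <;> fun_prop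

theorem EuclideanSpace.ofLp_dotProduct_ofLp {ι : Type*} [Fintype ι] (x y : EuclideanSpace ℝ ι) :
    x.ofLp ⬝ᵥ y.ofLp = ⟪x, y⟫ := by
  rw [EuclideanSpace.inner_eq_star_dotProduct, star_trivial, dotProduct_comm]

theorem rotate_nonvanishing_curve_to_axis_general
    (a b : ℝ)
    (u : ℝ → EuclideanSpace ℝ (Fin 3))
    (hu : ContDiffOn ℝ 1 u (Icc a b))
    (hu0 : ∀ x ∈ Icc a b, u x ≠ 0) :
    ∃ R : ℝ → Matrix (Fin 3) (Fin 3) ℝ,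
      (∀ i j, ContDiffOn ℝ 1 (fun x => R x i j) (Icc a b)) ∧
      (∀ x ∈ Icc a b, (R x)ᵀ * R x = 1 ∧ (R x).det = 1) ∧
      (∀ x ∈ Icc a b,
        R x *ᵥ (WithLp.equiv 2 (Fin 3 → ℝ) (u x)) = ![‖u x‖, 0, 0]) := by
  set v : ℝ → EuclideanSpace ℝ (Fin 3) := fun x => ‖u x‖⁻¹ • u x
  have hv : ContDiffOn ℝ 1 v (Icc a b) := hu.inv_norm_smul hu0
  have hv1 (x : ℝ) (hx : x ∈ Icc a b) : ‖v x‖ = 1 := norm_smul_inv_norm (hu0 x hx)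
  obtain ⟨e, he⟩ := exists_forall_notMem_span_singleton_of_differentiableOn (by simp)
    (hv.differentiableOn one_ne_zero)
  obtain ⟨q, hq, hq1⟩ := exists_contDiffOn_unit_orthogonal hv hv1 he
  have hdot (x : ℝ) (hx : x ∈ Icc a b) : (v x).ofLp ⬝ᵥ (v x).ofLp = 1 ∧
      (q x).ofLp ⬝ᵥ (q x).ofLp = 1 ∧ (v x).ofLp ⬝ᵥ (q x).ofLp = 0 := by
    simp only [EuclideanSpace.ofLp_dotProduct_ofLp, real_inner_self_eq_norm_sq, hv1 x hx,
      (hq1 x hx).1, (hq1 x hx).2, one_pow, and_self]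
  refine ⟨fun x => of ![(v x).ofLp, (q x).ofLp, (v x).ofLp ⨯₃ (q x).ofLp],
    contDiffOn_of_cross_apply hv hq, fun x hx => ?_, fun x hx => ?_⟩
  · obtain ⟨hvv, hqq, hvq⟩ := hdot x hx
    have hR := mem_specialOrthogonalGroup_iff.1 (of_cross_mem_specialOrthogonalGroup hvv hqq hvq)
    exact ⟨(mem_orthogonalGroup_iff' _ _).1 hR.1, hR.2⟩
  · have hu_eq : WithLp.equiv 2 (Fin 3 → ℝ) (u x) = ‖u x‖ • (v x).ofLp := by
      simp [v, smul_smul, mul_inv_cancel₀ (norm_ne_zero_iff.2 (hu0 x hx))]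
    rw [hu_eq, of_cross_mulVec_smul (hdot x hx).1 (hdot x hx).2.2]

/-- Normal-form step of Lemma 1: a `C¹` nonvanishing curve `u : [a,b] → ℝ³` can be rotated
by a `C¹` family of rotations `R(x) ∈ SO(3)` to the form `R(x)u(x) = (‖u(x)‖, 0, 0)ᵀ`. -/
theorem rotate_nonvanishing_curve_to_axis
    (a b : ℝ) (hab : a < b)
    (u : ℝ → EuclideanSpace ℝ (Fin 3))
    (hu : ContDiffOn ℝ 1 u (Icc a b))
    (hu0 : ∀ x ∈ Icc a b, u x ≠ 0) :
    ∃ R : ℝ → Matrix (Fin 3) (Fin 3) ℝ,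
      (∀ i j, ContDiffOn ℝ 1 (fun x => R x i j) (Icc a b)) ∧
      (∀ x ∈ Icc a b, (R x)ᵀ * R x = 1 ∧ (R x).det = 1) ∧
      (∀ x ∈ Icc a b,
        R x *ᵥ (WithLp.equiv 2 (Fin 3 → ℝ) (u x)) = ![‖u x‖, 0, 0]) :=
  rotate_nonvanishing_curve_to_axis_general a b u hu hu0
end

section
/- Let Q₁, Q₂, Q₃ be linearly independent 4×4 complex matrices satisfying [Q₁,Q₂] = Q₃, [Q₂,Q₃] = Q₁, [Q₃,Q₁] = Q₂. Let f₁,f₂,f₃ : ℝ → ℂ be continuous, let 𝒱 : ℝ → GL(4,ℂ) be differentiable, let g : ℝ → ℂ be differentiable with g(x) ≠ 0 for all x, and let f̃₁,f̃₂,f̃₃ : ℝ → ℂ be continuous. Assume: (i) 𝒱(x)⁻¹𝒱'(x) + 𝒱(x)⁻¹(Σ_a f_a(x)Q_a)𝒱(x) = Σ_a f̃_a(x)Q_a for all x; (ii) setting G(x) = Σ_a g_a(x)Q_a for some differentiable g_a : ℝ → ℂ, one has 𝒱(x)⁻¹G(x)𝒱(x) = g(x)Q₁ for all x; (iii) the symmetry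 condition G'(x) = Σ_a f_a(x)(G(x)Q_a − Q_aG(x)) holds for all x. Then f̃₂ ≡ 0 and f̃₃ ≡ 0, g is constant, and for any x₀ ∈ ℝ every differentiable solution ψ : ℝ → ℂ⁴ of ψ'(x) + Σ_a f_a(x)Q_aψ(x) = 0 is given in closed form by ψ(x) = 𝒱(x)·exp(−F(x)Q₁)·𝒱(x₀)⁻¹ψ(x₀), where F(x) = ∫_{x₀}^{x} f̃₁(t) dt. -/
/-!
Indices start at `0`, as in the Lean statement. Conjugation by `𝒱` turns the symmetry condition
`G' = ⁅G, A⁆`, `A = Σ fₐ Qₐ`, into `K' = ⁅K, Ã⁆` for `K = 𝒱⁻¹ G 𝒱 = g Q₀` and the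
gauge-transformed coefficients `Ã = Σ f̃ₐ Qₐ`. As `⁅Q₀, Ã⁆ = f̃₁ Q₂ - f̃₂ Q₁`, linear independence
of the `Qₐ` and `g ≠ 0` give `g' = 0` and `f̃₁ = f̃₂ = 0`. Then `φ = 𝒱⁻¹ ψ` solves
`φ' = -f̃₀ Q₀ φ`, a system with commuting coefficients, so `exp (F Q₀) φ` is constant.
-/

open Matrix intervalIntegral

-- Any Banach algebra norm on matrices would do: only their topology enters the statement.
attribute [local instance] Matrix.linftyOpNormedRing Matrix.linftyOpNormedAlgebra

section MatrixCalculus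

variable {𝕜 : Type*} [RCLike 𝕜] {n : Type*} [Fintype n] [DecidableEq n]

theorem hasDerivAt_matrix_iff {f : ℝ → Matrix n n 𝕜} {f' : Matrix n n 𝕜} {x : ℝ} :
    HasDerivAt f f' x ↔ ∀ i j, HasDerivAt (fun t => f t i j) (f' i j) x := by
  simp only [hasDerivAt_iff_tendsto_slope]
  exact hasDerivAt_iff_tendsto_slope.trans
    (tendsto_pi_nhds.trans (forall_congr' fun _ => tendsto_pi_nhds))

theorem HasDerivAt.matrix_mulVec {A : ℝ → Matrix n n 𝕜} {A' : Matrix n n 𝕜}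
    {v : ℝ → n → 𝕜} {v' : n → 𝕜} {x : ℝ} (hA : HasDerivAt A A' x) (hv : HasDerivAt v v' x) :
    HasDerivAt (fun t => A t *ᵥ v t) (A' *ᵥ v x + A x *ᵥ v') x := by
  refine hasDerivAt_pi.2 fun i => ?_
  simp only [mulVec, dotProduct, Pi.add_apply, ← Finset.sum_add_distrib]
  exact HasDerivAt.fun_sum fun j _ =>
    (hasDerivAt_matrix_iff.1 hA i j).mul (hasDerivAt_pi.1 hv j)

theorem HasDerivAt.matrix_inv {V : ℝ → Matrix n n 𝕜} {V' : Matrix n n 𝕜} {x : ℝ}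
    (hV : HasDerivAt V V' x) (hVx : IsUnit (V x)) :
    HasDerivAt (fun t => (V t)⁻¹) (-((V x)⁻¹ * V' * (V x)⁻¹)) x := by
  obtain ⟨u, hu⟩ := hVx
  have h := (hu ▸ hasFDerivAt_ringInverse (𝕜 := ℝ) u).comp_hasDerivAt x hV
  rw [show Ring.inverse ∘ V = fun t => (V t)⁻¹ from
    funext fun t => (Matrix.nonsing_inv_eq_ringInverse _).symm] at h
  refine h.congr_deriv ?_
  simp [← hu, Matrix.coe_units_inv, Matrix.mul_assoc]

/-- The coefficient matrix of `d/dx + A` after the change of variables `ψ = V φ`, at a point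
where `V` has derivative `V'`. -/
noncomputable def gaugeTransform (V V' A : Matrix n n 𝕜) : Matrix n n 𝕜 :=
  V⁻¹ * V' + V⁻¹ * A * V

variable {V : ℝ → Matrix n n 𝕜} {V' A : Matrix n n 𝕜} {x : ℝ}

theorem HasDerivAt.gauge_mulVec {ψ : ℝ → n → 𝕜} (hV : HasDerivAt V V' x) (hVx : IsUnit (V x))
    (hψ : HasDerivAt ψ (-(A *ᵥ ψ x)) x) :
    HasDerivAt (fun t => (V t)⁻¹ *ᵥ ψ t)
      (-(gaugeTransform (V x) V' A *ᵥ ((V x)⁻¹ *ᵥ ψ x))) x := by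
  have hdet := (Matrix.isUnit_iff_isUnit_det _).1 hVx
  refine ((hV.matrix_inv hVx).matrix_mulVec hψ).congr_deriv ?_
  simp only [gaugeTransform, mulVec_mulVec, add_mul, Matrix.mul_assoc, mul_nonsing_inv _ hdet,
    Matrix.mul_one, add_mulVec, neg_mulVec, mulVec_neg, neg_add]

theorem HasDerivAt.conj_of_lie {G : ℝ → Matrix n n 𝕜} (hV : HasDerivAt V V' x)
    (hVx : IsUnit (V x)) (hG : HasDerivAt G ⁅G x, A⁆ x) :
    HasDerivAt (fun t => (V t)⁻¹ * G t * V t)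
      ⁅(V x)⁻¹ * G x * V x, gaugeTransform (V x) V' A⁆ x := by
  have hdet := (Matrix.isUnit_iff_isUnit_det _).1 hVx
  refine (((hV.matrix_inv hVx).mul hG).mul hV).congr_deriv ?_
  simp only [gaugeTransform, Ring.lie_def, mul_add, add_mul, mul_sub, sub_mul, neg_mul,
    Pi.mul_apply, Matrix.mul_assoc, mul_nonsing_inv_cancel_left _ _ hdet]
  abel

theorem deriv_smul_eq_lie_gaugeTransform {G : ℝ → Matrix n n 𝕜} {g : ℝ → 𝕜} {Q : Matrix n n 𝕜}
    (hV : HasDerivAt V V' x) (hVx : IsUnit (V x)) (hG : HasDerivAt G ⁅G x, A⁆ x)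
    (hg : DifferentiableAt ℝ g x) (hK : ∀ t, (V t)⁻¹ * G t * V t = g t • Q) :
    deriv g x • Q = ⁅g x • Q, gaugeTransform (V x) V' A⁆ := by
  have h := hV.conj_of_lie hVx hG
  simp only [hK] at h
  exact (hg.hasDerivAt.smul_const Q).unique h

end MatrixCalculus

theorem Ring.lie_sum_smul {R B ι : Type*} [CommRing R] [Ring B] [Algebra R B] (s : Finset ι)
    (x : B) (c : ι → R) (Q : ι → B) :
    ⁅x, ∑ a ∈ s, c a • Q a⁆ = ∑ a ∈ s, c a • (x * Q a - Q a * x) := by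
  simp only [Ring.lie_def, Finset.mul_sum, Finset.sum_mul, ← Finset.sum_sub_distrib,
    mul_smul_comm, smul_mul_assoc, smul_sub]

section So3

variable {K A : Type*} [Field K] [Ring A] [Algebra K A] {Q : Fin 3 → A}

theorem lie_first_sum_smul (h01 : ⁅Q 0, Q 1⁆ = Q 2) (h20 : ⁅Q 2, Q 0⁆ = Q 1) (c : Fin 3 → K) :
    ⁅Q 0, ∑ a, c a • Q a⁆ = c 1 • Q 2 - c 2 • Q 1 := by
  rw [Ring.lie_def] at h01 h20
  have e01 : Q 0 * Q 1 = Q 1 * Q 0 + Q 2 := by rw [← h01]; abel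
  have e02 : Q 0 * Q 2 = Q 2 * Q 0 - Q 1 := by rw [← h20]; abel
  simp only [Ring.lie_def, Fin.sum_univ_three, mul_add, add_mul, mul_smul_comm, smul_mul_assoc,
    e01, e02]
  module

theorem LinearIndependent.eq_zero_of_smul_eq_lie (hind : LinearIndependent K Q)
    (h01 : ⁅Q 0, Q 1⁆ = Q 2) (h20 : ⁅Q 2, Q 0⁆ = Q 1) {d g : K} {c : Fin 3 → K} (hg : g ≠ 0)
    (h : d • Q 0 = ⁅g • Q 0, ∑ a, c a • Q a⁆) : d = 0 ∧ c 1 = 0 ∧ c 2 = 0 := by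
  rw [Ring.lie_def, smul_mul_assoc, mul_smul_comm, ← smul_sub, ← Ring.lie_def,
    lie_first_sum_smul h01 h20] at h
  have hsum : ∑ a, ![d, g * c 2, -(g * c 1)] a • Q a = 0 := by
    simp only [Fin.sum_univ_three, Matrix.cons_val, h]
    module
  have hcoeff := Fintype.linearIndependent_iff.1 hind _ hsum
  simpa [hg] using And.intro (hcoeff 0) (And.intro (hcoeff 2) (hcoeff 1))

end So3

section LinearODE

variable {𝕜 : Type*} [RCLike 𝕜] {n : Type*} [Fintype n] [DecidableEq n]

theorem eq_exp_integral_smul_mulVec {c : ℝ → 𝕜} (hc : Continuous c) (Q : Matrix n n 𝕜)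
    {φ : ℝ → n → 𝕜} (hφ : ∀ t, HasDerivAt φ (-((c t • Q) *ᵥ φ t)) t) (x₀ x : ℝ) :
    φ x = NormedSpace.exp (-(∫ t in x₀..x, c t) • Q) *ᵥ φ x₀ := by
  set F : ℝ → 𝕜 := fun u => ∫ t in x₀..u, c t
  have hE : ∀ t, HasDerivAt (fun u => NormedSpace.exp (F u • Q))
      (c t • (NormedSpace.exp (F t • Q) * Q)) t := fun t =>
    (hasDerivAt_exp_smul_const Q (F t)).scomp t (hc.integral_hasStrictDerivAt x₀ t).hasDerivAt
  have hconst : ∀ t, HasDerivAt (fun u => NormedSpace.exp (F u • Q) *ᵥ φ u) 0 t := fun t =>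
    ((hE t).matrix_mulVec (hφ t)).congr_deriv (by
      simp only [smul_mulVec, ← mulVec_mulVec, mulVec_neg, mulVec_smul, add_neg_cancel])
  have hx : NormedSpace.exp (F x • Q) *ᵥ φ x = φ x₀ := by
    simpa [F] using is_const_of_deriv_eq_zero (fun t => (hconst t).differentiableAt)
      (fun t => (hconst t).deriv) x x₀
  have hinv : NormedSpace.exp (-F x • Q) * NormedSpace.exp (F x • Q) = 1 :=
    (NormedSpace.exp_add_of_commute (((Commute.refl Q).smul_left _).smul_right _)).symm.trans
      (by rw [← add_smul, neg_add_cancel, zero_smul]; exact NormedSpace.exp_zero)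
  rw [← hx, mulVec_mulVec, hinv, one_mulVec]

end LinearODE

theorem lemma1_integrability_by_quadratures_general
    (Q : Fin 3 → Matrix (Fin 4) (Fin 4) ℂ)
    (hind : LinearIndependent ℂ Q)
    (h12 : Q 0 * Q 1 - Q 1 * Q 0 = Q 2)
    (h31 : Q 2 * Q 0 - Q 0 * Q 2 = Q 1)
    (f : Fin 3 → ℝ → ℂ)
    (𝒱 : ℝ → Matrix (Fin 4) (Fin 4) ℂ)
    (h𝒱inv : ∀ x, IsUnit (𝒱 x))
    (h𝒱diff : ∀ i j, Differentiable ℝ (fun x => 𝒱 x i j))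
    (g : ℝ → ℂ) (hg : Differentiable ℝ g) (hg0 : ∀ x, g x ≠ 0)
    (ftilde : Fin 3 → ℝ → ℂ) (hftilde : ∀ a, Continuous (ftilde a))
    (G : ℝ → Matrix (Fin 4) (Fin 4) ℂ)
    (hi : ∀ x : ℝ,
      (𝒱 x)⁻¹ * (Matrix.of fun i j => deriv (fun t => 𝒱 t i j) x)
        + (𝒱 x)⁻¹ * (∑ a : Fin 3, f a x • Q a) * 𝒱 x
      = ∑ a : Fin 3, ftilde a x • Q a)
    (hii : ∀ x : ℝ, (𝒱 x)⁻¹ * G x * 𝒱 x = g x • Q 0)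
    (hiii : ∀ (x : ℝ) (i j : Fin 4),
      HasDerivAt (fun t => G t i j)
        ((∑ a : Fin 3, f a x • (G x * Q a - Q a * G x)) i j) x) :
    (∀ x, ftilde 1 x = 0) ∧ (∀ x, ftilde 2 x = 0) ∧ (∀ x y, g x = g y) ∧
    (∀ x₀ : ℝ, ∀ ψ : ℝ → (Fin 4 → ℂ),
      (∀ x : ℝ, HasDerivAt ψ (-(∑ a : Fin 3, f a x • (Q a *ᵥ ψ x))) x) →
      ∀ x : ℝ,
        ψ x = 𝒱 x *ᵥ
          (NormedSpace.exp (-(∫ t in x₀..x, ftilde 0 t) • Q 0) *ᵥ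
            ((𝒱 x₀)⁻¹ *ᵥ ψ x₀))) := by
  set A : ℝ → Matrix (Fin 4) (Fin 4) ℂ := fun x => ∑ a, f a x • Q a
  have hV : ∀ x, HasDerivAt 𝒱 (Matrix.of fun i j => deriv (fun t => 𝒱 t i j) x) x := fun x =>
    hasDerivAt_matrix_iff.2 fun i j => (h𝒱diff i j x).hasDerivAt
  have hgauge : ∀ x, gaugeTransform (𝒱 x) (Matrix.of fun i j => deriv (fun t => 𝒱 t i j) x)
      (A x) = ∑ a, ftilde a x • Q a := hi
  have hG : ∀ x, HasDerivAt G ⁅G x, A x⁆ x := fun x =>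
    hasDerivAt_matrix_iff.2 (Ring.lie_sum_smul _ (G x) (f · x) Q ▸ hiii x)
  have hzero : ∀ x, deriv g x = 0 ∧ ftilde 1 x = 0 ∧ ftilde 2 x = 0 := fun x =>
    hind.eq_zero_of_smul_eq_lie (by rwa [Ring.lie_def]) (by rwa [Ring.lie_def]) (hg0 x)
      (hgauge x ▸ deriv_smul_eq_lie_gaugeTransform (hV x) (h𝒱inv x) (hG x) (hg x) hii)
  refine ⟨fun x => (hzero x).2.1, fun x => (hzero x).2.2,
    is_const_of_deriv_eq_zero hg fun x => (hzero x).1, fun x₀ ψ hψ x => ?_⟩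
  have hφ : ∀ t, HasDerivAt (fun s => (𝒱 s)⁻¹ *ᵥ ψ s)
      (-((ftilde 0 t • Q 0) *ᵥ ((𝒱 t)⁻¹ *ᵥ ψ t))) t := fun t => by
    have h := (hV t).gauge_mulVec (A := A t) (h𝒱inv t)
      (by simpa only [A, Matrix.sum_mulVec, Matrix.smul_mulVec] using hψ t)
    rwa [hgauge, Fin.sum_univ_three, (hzero t).2.1, (hzero t).2.2, zero_smul, zero_smul,
      add_zero, add_zero] at h
  rw [← eq_exp_integral_smul_mulVec (hftilde 0) (Q 0) hφ x₀ x, mulVec_mulVec,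
    mul_nonsing_inv _ ((isUnit_iff_isUnit_det _).1 (h𝒱inv x)), one_mulVec]

/-- Quantitative form of Lemma 1: a first-order system `ψ' + Σ_a f_a(x)Q_aψ = 0` with
`so(3)`-valued coefficient matrix admitting a Lie symmetry `G(x) = Σ_a g_a(x)Q_a`, brought
by a gauge transformation `𝒱` to the form `d/dx + Σ_a f̃_aQ_a` with the symmetry in normal
form `g(x)Q₁`, is integrable by quadratures: `f̃₂ ≡ 0`, `f̃₃ ≡ 0`, `g` is constant, and
every solution is `ψ(x) = 𝒱(x)·exp(-F(x)Q₁)·𝒱(x₀)⁻¹ψ(x₀)` with `F(x) = ∫_{x₀}^x f̃₁`. -/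
theorem lemma1_integrability_by_quadratures
    (Q : Fin 3 → Matrix (Fin 4) (Fin 4) ℂ)
    (hind : LinearIndependent ℂ Q)
    (h12 : Q 0 * Q 1 - Q 1 * Q 0 = Q 2)
    (h23 : Q 1 * Q 2 - Q 2 * Q 1 = Q 0)
    (h31 : Q 2 * Q 0 - Q 0 * Q 2 = Q 1)
    (f : Fin 3 → ℝ → ℂ) (hf : ∀ a, Continuous (f a))
    (𝒱 : ℝ → Matrix (Fin 4) (Fin 4) ℂ)
    (h𝒱inv : ∀ x, IsUnit (𝒱 x))
    (h𝒱diff : ∀ i j, Differentiable ℝ (fun x => 𝒱 x i j))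
    (g : ℝ → ℂ) (hg : Differentiable ℝ g) (hg0 : ∀ x, g x ≠ 0)
    (ftilde : Fin 3 → ℝ → ℂ) (hftilde : ∀ a, Continuous (ftilde a))
    (ga : Fin 3 → ℝ → ℂ) (hga : ∀ a, Differentiable ℝ (ga a))
    (G : ℝ → Matrix (Fin 4) (Fin 4) ℂ)
    (hG : ∀ x, G x = ∑ a : Fin 3, ga a x • Q a)
    (hi : ∀ x : ℝ,
      (𝒱 x)⁻¹ * (Matrix.of fun i j => deriv (fun t => 𝒱 t i j) x)
        + (𝒱 x)⁻¹ * (∑ a : Fin 3, f a x • Q a) * 𝒱 x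
      = ∑ a : Fin 3, ftilde a x • Q a)
    (hii : ∀ x : ℝ, (𝒱 x)⁻¹ * G x * 𝒱 x = g x • Q 0)
    (hiii : ∀ (x : ℝ) (i j : Fin 4),
      HasDerivAt (fun t => G t i j)
        ((∑ a : Fin 3, f a x • (G x * Q a - Q a * G x)) i j) x) :
    (∀ x, ftilde 1 x = 0) ∧ (∀ x, ftilde 2 x = 0) ∧ (∀ x y, g x = g y) ∧
    (∀ x₀ : ℝ, ∀ ψ : ℝ → (Fin 4 → ℂ),
      (∀ x : ℝ, HasDerivAt ψ (-(∑ a : Fin 3, f a x • (Q a *ᵥ ψ x))) x) →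
      ∀ x : ℝ,
        ψ x = 𝒱 x *ᵥ
          (NormedSpace.exp (-(∫ t in x₀..x, ftilde 0 t) • Q 0) *ᵥ
            ((𝒱 x₀)⁻¹ *ᵥ ψ x₀))) :=
  lemma1_integrability_by_quadratures_general Q hind h12 h31 f 𝒱 h𝒱inv h𝒱diff g hg hg0 ftilde
    hftilde G hi hii hiii
end
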